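/- Let m be a positive integer, F = GF(2^m), r ≥ 1, and for a = (a₀,...,a_r) ∈ F^{r+1} let P_a = Σ_{t=0}^r P^t(a_t). Let x and e be binary m-tuples with e ≠ 0, and set y = x⊕e (bitwise XOR). Then Σ_{a ∈ F^{r+1}} i^{y P_a yᵀ − x P_a xᵀ} ≠ 0 (i.e. the rows of the Delsarte–Goethals sieve indexed by x and y are not orthogonal) if and only if both of the following hold: (C1) for every t with 1 ≤ t ≤ r, (x/e) + (x/e)^{2^t} = 1 + Σ_{j=0}^{m-1} e_j·(ξ^j/e)^{2^t+1} in F, where x, e are identified with field elements and e_j are the binary coordinates of e; and (C2) Σ_{a ∈ F} i^{e P⁰(a) (2x+e)ᵀ} ≠ 0, where the exponent is evaluated in ℤ₄ (the vector 2x+e has entries 2x_j + e_j in ℤ₄). -/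

import Mathlib

noncomputable section

namespace DGPaper

/-- The absolute trace `GF(2^m) → 𝔽₂`. -/
def tr {m : ℕ} (x : GaloisField 2 m) : ZMod 2 :=
  Algebra.trace (ZMod 2) (GaloisField 2 m) x

/-- Lift a bit to `ℤ₄`. -/
def lift2 (v : ZMod 2) : ZMod 4 := (v.val : ZMod 4)

/-- `i^v` for `v ∈ ℤ₄`. -/
def zeta (v : ZMod 4) : ℂ := Complex.I ^ v.val

/-- The field element of `GF(2^m)` associated to a binary `m`-tuple via the basis
`1, ξ, …, ξ^{m-1}`. -/
def fld {m : ℕ} (ξ : GaloisField 2 m) (x : Fin m → ZMod 2) : GaloisField 2 m :=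
  ∑ j : Fin m, x j • ξ ^ (j : ℕ)

/-- The binary symmetric matrix `P^t(a)`: for `t = 0` it represents the bilinear form
`(x,y) ↦ Tr(x y a)`, and for `t ≥ 1` the (zero-diagonal) form
`(x,y) ↦ Tr((x y^{2^t} + x^{2^t} y) a)`, in the basis `1, ξ, …, ξ^{m-1}` of `GF(2^m)`
over `𝔽₂`. -/
def Pmat {m : ℕ} (ξ : GaloisField 2 m) (t : ℕ) (a : GaloisField 2 m) :
    Matrix (Fin m) (Fin m) (ZMod 2) :=
  Matrix.of fun i j =>
    if t = 0 then tr (ξ ^ (i : ℕ) * ξ ^ (j : ℕ) * a)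
    else tr ((ξ ^ (i : ℕ) * (ξ ^ (j : ℕ)) ^ (2 ^ t) + (ξ ^ (i : ℕ)) ^ (2 ^ t) * ξ ^ (j : ℕ)) * a)

/-- The quadratic form `x P xᵀ` evaluated in `ℤ₄` (the `0/1` entries of `P` and `x`
being lifted to `ℤ₄`). -/
def qform {m : ℕ} (P : Matrix (Fin m) (Fin m) (ZMod 2)) (x : Fin m → ZMod 2) : ZMod 4 :=
  ∑ i : Fin m, ∑ j : Fin m, lift2 (x i) * lift2 (P i j) * lift2 (x j)

instance {m : ℕ} : Fintype (GaloisField 2 m) := Fintype.ofFinite _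

end DGPaper

/-!
Over `ℤ₄` a symmetric binary form satisfies `y P yᵀ = Σᵢ yᵢ Pᵢᵢ + 2 Σ_{i<j} yᵢ Pᵢⱼ yⱼ`.
Only `P⁰(a₀)` has a nonzero diagonal, and the strictly upper triangular part of `P^t(b)`
evaluated at `y` is `Tr(b (Y^{2^t+1} + Σⱼ yⱼ ξ^{j(2^t+1)}))`, `Y` being the field element
of `y`. Hence `y P_a yᵀ - x P_a xᵀ` is a sum of one term per coordinate `a_t`, and the sum
over `F^{r+1}` splits as a product of `r + 1` sums over `F`. The factor `t = 0` is the sum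
in (C2). For `t ≥ 1` it is `Σ_b (-1)^{Tr(c_t b)}` with `c_t = crossCoeff ξ t x e`, which is
nonzero exactly when `c_t = 0`; dividing `c_t = 0` by `e^{2^t+1}` gives (C1).
-/

theorem Finset.sum_sum_eq_sum_diag_add_sum_lt {ι M : Type*} [Fintype ι] [LinearOrder ι]
    [AddCommMonoid M] (f : ι → ι → M) :
    ∑ i, ∑ j, f i j = ∑ i, f i i + ∑ i, ∑ j with i < j, (f i j + f j i) := by
  have hlow : ∑ i, ∑ j with j < i, f i j = ∑ i, ∑ j with i < j, f j i :=
    Finset.sum_comm' (by simp)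
  have hrow (i : ι) :
      ∑ j, f i j = ∑ j with i < j, f i j + (f i i + ∑ j with j < i, f i j) := by
    rw [← Finset.sum_filter_add_sum_filter_not Finset.univ (i < ·),
      ← Finset.sum_insert (by simp)]
    congr 2
    ext j
    simp [le_iff_lt_or_eq, or_comm, eq_comm]
  simp only [hrow, Finset.sum_add_distrib, hlow]
  abel

theorem AddChar.map_sum_eq_prod {ι A M : Type*} [AddCommMonoid A] [CommMonoid M]
    (ψ : AddChar A M) (s : Finset ι) (f : ι → A) :
    ψ (∑ i ∈ s, f i) = ∏ i ∈ s, ψ (f i) := by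
  induction s using Finset.cons_induction with
  | empty => simp
  | cons a s ha ih => rw [Finset.sum_cons, Finset.prod_cons, AddChar.map_add_eq_mul, ih]

namespace DGPaper

lemma lift2_mul (u v : ZMod 2) : lift2 (u * v) = lift2 u * lift2 v := by
  decide +revert

def doubleLift : ZMod 2 →+ ZMod 4 where
  toFun z := 2 * lift2 z
  map_zero' := by decide
  map_add' := by decide

lemma doubleLift_apply (z : ZMod 2) : doubleLift z = 2 * lift2 z := rfl

def zetaChar : AddChar (ZMod 4) ℂ where
  toFun := zeta
  map_zero_eq_one' := by simp [zeta]
  map_add_eq_mul' u v := by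
    rw [zeta, zeta, zeta, ← pow_add, ZMod.val_add]
    conv_rhs => rw [← Nat.div_add_mod (u.val + v.val) 4]
    rw [pow_add, pow_mul, Complex.I_pow_four, one_pow, one_mul]

lemma zetaChar_apply (v : ZMod 4) : zetaChar v = zeta v := rfl

variable {m : ℕ}

def upperForm (P : Matrix (Fin m) (Fin m) (ZMod 2)) (y : Fin m → ZMod 2) : ZMod 2 :=
  ∑ i, ∑ j with i < j, y i * P i j * y j

lemma upperForm_add_sum {ι : Type*} (s : Finset ι) (P : Matrix (Fin m) (Fin m) (ZMod 2))
    (Q : ι → Matrix (Fin m) (Fin m) (ZMod 2)) (y : Fin m → ZMod 2) :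
    upperForm (P + ∑ t ∈ s, Q t) y = upperForm P y + ∑ t ∈ s, upperForm (Q t) y := by
  simp only [upperForm, Matrix.add_apply, Matrix.sum_apply, mul_add, add_mul, Finset.mul_sum,
    Finset.sum_mul, Finset.sum_add_distrib]
  congr 1
  rw [Finset.sum_comm]
  refine Finset.sum_congr rfl fun i _ => Finset.sum_comm

lemma qform_eq_diag_add_upperForm {P : Matrix (Fin m) (Fin m) (ZMod 2)} (hP : P.IsSymm)
    (y : Fin m → ZMod 2) :
    qform P y = ∑ i, lift2 (y i) * lift2 (P i i) * lift2 (y i) + doubleLift (upperForm P y) := by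
  rw [qform, Finset.sum_sum_eq_sum_diag_add_sum_lt, upperForm, map_sum]
  congr 1
  refine Finset.sum_congr rfl fun i _ => ?_
  rw [map_sum]
  refine Finset.sum_congr rfl fun j _ => ?_
  rw [hP.apply, doubleLift_apply, lift2_mul, lift2_mul]
  ring

def qformDiff (P : Matrix (Fin m) (Fin m) (ZMod 2)) (x e : Fin m → ZMod 2) : ZMod 4 :=
  ∑ i, ∑ j, lift2 (e i) * lift2 (P i j) * (2 * lift2 (x j) + lift2 (e j))

lemma qform_add_sub {P : Matrix (Fin m) (Fin m) (ZMod 2)} (hP : P.IsSymm)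
    (x e : Fin m → ZMod 2) : qform P (x + e) - qform P x = qformDiff P x e := by
  set g : Fin m → Fin m → ZMod 4 := fun i j =>
    lift2 (x i + e i) * lift2 (P i j) * lift2 (x j + e j) -
      lift2 (x i) * lift2 (P i j) * lift2 (x j) -
      lift2 (e i) * lift2 (P i j) * (2 * lift2 (x j) + lift2 (e j))
  -- `g` vanishes on the diagonal and `g i j + g j i = 0` as `P` is symmetric: two identities
  -- between lifts of bits.
  have hdiag : ∀ a b p : ZMod 2, lift2 (a + b) * lift2 p * lift2 (a + b) -
      lift2 a * lift2 p * lift2 a - lift2 b * lift2 p * (2 * lift2 a + lift2 b) = 0 := by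
    decide
  have hanti : ∀ a b c d p : ZMod 2,
      (lift2 (a + b) * lift2 p * lift2 (c + d) - lift2 a * lift2 p * lift2 c -
        lift2 b * lift2 p * (2 * lift2 c + lift2 d)) +
      (lift2 (c + d) * lift2 p * lift2 (a + b) - lift2 c * lift2 p * lift2 a -
        lift2 d * lift2 p * (2 * lift2 a + lift2 b)) = 0 := by
    decide
  have hg : ∑ i, ∑ j, g i j = 0 := by
    rw [Finset.sum_sum_eq_sum_diag_add_sum_lt]
    simp only [g, hdiag, hP.apply, hanti, Finset.sum_const_zero, add_zero]
  rw [← sub_eq_zero, qform, qform, qformDiff, ← hg]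
  simp only [g, Finset.sum_sub_distrib, Pi.add_apply]

lemma qform_add_sum {ι : Type*} (s : Finset ι) {P : Matrix (Fin m) (Fin m) (ZMod 2)}
    {Q : ι → Matrix (Fin m) (Fin m) (ZMod 2)} (hP : P.IsSymm) (hQ : ∀ t, (Q t).IsSymm)
    (hQdiag : ∀ t i, Q t i i = 0) (y : Fin m → ZMod 2) :
    qform (P + ∑ t ∈ s, Q t) y = qform P y + ∑ t ∈ s, doubleLift (upperForm (Q t) y) := by
  have hsymm : (P + ∑ t ∈ s, Q t).IsSymm :=
    .ext fun i j => by simp [Matrix.sum_apply, hP.apply, (hQ _).apply]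
  rw [qform_eq_diag_add_upperForm hsymm, qform_eq_diag_add_upperForm hP, upperForm_add_sum,
    map_add, map_sum]
  simp [Matrix.sum_apply, hQdiag, add_assoc]

lemma Pmat_isSymm (ξ : GaloisField 2 m) (t : ℕ) (a : GaloisField 2 m) : (Pmat ξ t a).IsSymm :=
  .ext fun i j => by unfold Pmat; split_ifs <;> simp only [Matrix.of_apply] <;> ring_nf

lemma Pmat_apply_self {t : ℕ} (ht : t ≠ 0) (ξ a : GaloisField 2 m) (i : Fin m) :
    Pmat ξ t a i i = 0 := by
  simp [Pmat, ht, mul_comm (ξ ^ (i : ℕ)), CharTwo.add_self_eq_zero, tr]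

lemma fld_add (ξ : GaloisField 2 m) (x y : Fin m → ZMod 2) :
    fld ξ (x + y) = fld ξ x + fld ξ y := by
  simp [fld, add_smul, Finset.sum_add_distrib]

lemma fld_pow_two_pow (ξ : GaloisField 2 m) (y : Fin m → ZMod 2) (t : ℕ) :
    fld ξ y ^ 2 ^ t = ∑ j, y j • (ξ ^ (j : ℕ)) ^ 2 ^ t := by
  simp [fld, sum_pow_char_pow, smul_pow, ZMod.pow_card_pow]

lemma fld_ne_zero {ξ : GaloisField 2 m}
    (hξ : LinearIndependent (ZMod 2) fun j : Fin m => ξ ^ (j : ℕ)) {e : Fin m → ZMod 2}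
    (he : e ≠ 0) : fld ξ e ≠ 0 := fun h =>
  he (funext (Fintype.linearIndependent_iff.mp hξ e h))

def upperCoeff (ξ : GaloisField 2 m) (t : ℕ) (y : Fin m → ZMod 2) : GaloisField 2 m :=
  fld ξ y ^ (2 ^ t + 1) + ∑ j, y j • (ξ ^ (j : ℕ)) ^ (2 ^ t + 1)

lemma upperCoeff_eq_sum_lt (ξ : GaloisField 2 m) (t : ℕ) (y : Fin m → ZMod 2) :
    upperCoeff ξ t y = ∑ i, ∑ j with i < j, (y i * y j) •
      (ξ ^ (i : ℕ) * (ξ ^ (j : ℕ)) ^ 2 ^ t + (ξ ^ (i : ℕ)) ^ 2 ^ t * ξ ^ (j : ℕ)) := by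
  have hsq : fld ξ y ^ (2 ^ t + 1) =
      ∑ i, ∑ j, (y i * y j) • (ξ ^ (i : ℕ) * (ξ ^ (j : ℕ)) ^ 2 ^ t) := by
    rw [pow_succ', fld_pow_two_pow, fld, Finset.sum_mul_sum]
    simp only [smul_mul_smul_comm]
  have hdiag : ∑ i, (y i * y i) • (ξ ^ (i : ℕ) * (ξ ^ (i : ℕ)) ^ 2 ^ t) =
      ∑ i, y i • (ξ ^ (i : ℕ)) ^ (2 ^ t + 1) := by
    have hidem : ∀ c : ZMod 2, c * c = c := by decide
    simp only [hidem, pow_succ']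
  rw [upperCoeff, hsq, Finset.sum_sum_eq_sum_diag_add_sum_lt, add_right_comm, hdiag,
    CharTwo.add_self_eq_zero, zero_add]
  refine Finset.sum_congr rfl fun i _ => Finset.sum_congr rfl fun j _ => ?_
  rw [mul_comm (y j), mul_comm (ξ ^ (j : ℕ)), smul_add]

lemma upperForm_Pmat {t : ℕ} (ht : t ≠ 0) (ξ b : GaloisField 2 m) (y : Fin m → ZMod 2) :
    upperForm (Pmat ξ t b) y = tr (upperCoeff ξ t y * b) := by
  rw [upperCoeff_eq_sum_lt, upperForm, Finset.sum_mul, tr, map_sum]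
  refine Finset.sum_congr rfl fun i _ => ?_
  rw [Finset.sum_mul, map_sum]
  refine Finset.sum_congr rfl fun j _ => ?_
  simp only [Pmat, Matrix.of_apply, if_neg ht, tr, smul_mul_assoc, map_smul, smul_eq_mul]
  ring

def crossCoeff (ξ : GaloisField 2 m) (t : ℕ) (x e : Fin m → ZMod 2) : GaloisField 2 m :=
  upperCoeff ξ t (x + e) - upperCoeff ξ t x

lemma crossCoeff_eq_zero_iff (ξ : GaloisField 2 m) (t : ℕ) (x : Fin m → ZMod 2)
    {e : Fin m → ZMod 2} (hE : fld ξ e ≠ 0) :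
    crossCoeff ξ t x e = 0 ↔
      fld ξ x / fld ξ e + (fld ξ x / fld ξ e) ^ 2 ^ t =
        1 + ∑ j : Fin m, e j • (ξ ^ (j : ℕ) / fld ξ e) ^ (2 ^ t + 1) := by
  set X := fld ξ x
  set E := fld ξ e
  set S := ∑ j : Fin m, e j • (ξ ^ (j : ℕ)) ^ (2 ^ t + 1)
  have hEq : E ^ (2 ^ t + 1) ≠ 0 := pow_ne_zero _ hE
  have hS : E ^ (2 ^ t + 1) * ∑ j : Fin m, e j • (ξ ^ (j : ℕ) / E) ^ (2 ^ t + 1) = S := by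
    simp only [S, Finset.mul_sum, mul_smul_comm, div_pow, mul_div_cancel₀ _ hEq]
  have hX : E ^ (2 ^ t + 1) * (X / E) = X * E ^ 2 ^ t := by
    field_simp
    ring
  have hXq : E ^ (2 ^ t + 1) * (X / E) ^ 2 ^ t = X ^ 2 ^ t * E := by
    rw [div_pow, pow_succ, mul_comm _ E, mul_assoc, mul_div_cancel₀ _ (pow_ne_zero _ hE),
      mul_comm]
  have hfactor : crossCoeff ξ t x e =
      E ^ (2 ^ t + 1) * (X / E + (X / E) ^ 2 ^ t -
        (1 + ∑ j : Fin m, e j • (ξ ^ (j : ℕ) / E) ^ (2 ^ t + 1))) := by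
    rw [mul_sub, mul_add, mul_add _ 1, mul_one, hX, hXq, hS, crossCoeff, upperCoeff, upperCoeff,
      fld_add, pow_succ (X + E), add_pow_char_pow]
    simp only [Pi.add_apply, add_smul, Finset.sum_add_distrib]
    linear_combination (E ^ (2 ^ t + 1) + S) * CharTwo.two_eq_zero (R := GaloisField 2 m)
  rw [hfactor, mul_eq_zero, or_iff_right hEq, sub_eq_zero]

lemma sum_zetaChar_doubleLift_tr_ne_zero_iff (c : GaloisField 2 m) :
    ∑ b, zetaChar (doubleLift (tr (c * b))) ≠ 0 ↔ c = 0 := by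
  let ψ : AddChar (GaloisField 2 m) ℂ :=
    ((zetaChar.compAddMonoidHom doubleLift).compAddMonoidHom
      (Algebra.trace (ZMod 2) (GaloisField 2 m)).toAddMonoidHom).mulShift c
  change ∑ b, ψ b ≠ 0 ↔ c = 0
  rw [AddChar.sum_ne_zero_iff_eq_zero]
  constructor
  · intro hψ
    by_contra hc
    obtain ⟨b, hb⟩ : ∃ b, tr (c * b) ≠ 0 := by
      by_contra! h
      exact hc ((traceForm_nondegenerate (ZMod 2) (GaloisField 2 m)).1 c h)
    have h1 : tr (c * b) = 1 := (by decide : ∀ z : ZMod 2, z ≠ 0 → z = 1) _ hb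
    have hψb : zetaChar (doubleLift (tr (c * b))) = 1 := DFunLike.congr_fun hψ b
    rw [h1, show doubleLift 1 = 2 by decide, zetaChar_apply, zeta] at hψb
    norm_num [show (2 : ZMod 4).val = 2 from rfl] at hψb
  · rintro rfl
    ext b
    simp [ψ]

def sieveMatrix (ξ : GaloisField 2 m) {r : ℕ} (a : Fin (r + 1) → GaloisField 2 m) :
    Matrix (Fin m) (Fin m) (ZMod 2) :=
  ∑ t : Fin (r + 1), Pmat ξ t (a t)

lemma qform_sieveMatrix (ξ : GaloisField 2 m) {r : ℕ} (a : Fin (r + 1) → GaloisField 2 m)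
    (y : Fin m → ZMod 2) :
    qform (sieveMatrix ξ a) y = qform (Pmat ξ 0 (a 0)) y +
      ∑ t : Fin r, doubleLift (tr (upperCoeff ξ (t + 1) y * a t.succ)) := by
  rw [sieveMatrix, Fin.sum_univ_succ, qform_add_sum _ (Pmat_isSymm ..) (fun _ => Pmat_isSymm ..)
    (fun _ _ => Pmat_apply_self (by simp) ..)]
  simp only [Fin.val_succ, upperForm_Pmat (Nat.succ_ne_zero _), Fin.val_zero]

lemma qform_sieveMatrix_add_sub (ξ : GaloisField 2 m) {r : ℕ}
    (a : Fin (r + 1) → GaloisField 2 m) (x e : Fin m → ZMod 2) :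
    qform (sieveMatrix ξ a) (x + e) - qform (sieveMatrix ξ a) x =
      qformDiff (Pmat ξ 0 (a 0)) x e +
        ∑ t : Fin r, doubleLift (tr (crossCoeff ξ (t + 1) x e * a t.succ)) := by
  rw [qform_sieveMatrix, qform_sieveMatrix, add_sub_add_comm, ← Finset.sum_sub_distrib,
    qform_add_sub (Pmat_isSymm ..)]
  simp only [crossCoeff, tr, ← map_sub, sub_mul]

lemma sum_zeta_sieveMatrix_eq_prod (ξ : GaloisField 2 m) (x e : Fin m → ZMod 2) (r : ℕ) :
    ∑ a : Fin (r + 1) → GaloisField 2 m,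
        zeta (qform (sieveMatrix ξ a) (x + e) - qform (sieveMatrix ξ a) x) =
      (∑ b, zeta (qformDiff (Pmat ξ 0 b) x e)) *
        ∏ t : Fin r, ∑ b, zetaChar (doubleLift (tr (crossCoeff ξ (t + 1) x e * b))) := by
  let φ : Fin (r + 1) → GaloisField 2 m → ℂ :=
    Fin.cons (fun b => zeta (qformDiff (Pmat ξ 0 b) x e))
      fun t b => zetaChar (doubleLift (tr (crossCoeff ξ (t + 1) x e * b)))
  calc _ = ∑ a : Fin (r + 1) → GaloisField 2 m, ∏ s, φ s (a s) := by
        refine Finset.sum_congr rfl fun a _ => ?_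
        rw [qform_sieveMatrix_add_sub, ← zetaChar_apply, AddChar.map_add_eq_mul,
          AddChar.map_sum_eq_prod, Fin.prod_univ_succ]
        rfl
    _ = ∏ s, ∑ b, φ s b := (Fintype.prod_sum φ).symm
    _ = _ := Fin.prod_univ_succ _

theorem dg_sieve_rows_nonorthogonal_iff_general
    (m r : ℕ)
    (ξ : GaloisField 2 m)
    (hξ : LinearIndependent (ZMod 2) fun j : Fin m => ξ ^ (j : ℕ))
    (x e : Fin m → ZMod 2) (he : e ≠ 0) :
    (∑ a : Fin (r + 1) → GaloisField 2 m,
        zeta (qform (∑ t : Fin (r + 1), Pmat ξ (t : ℕ) (a t)) (x + e) -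
          qform (∑ t : Fin (r + 1), Pmat ξ (t : ℕ) (a t)) x)) ≠ 0 ↔
      ((∀ t : ℕ, 1 ≤ t → t ≤ r →
          fld ξ x / fld ξ e + (fld ξ x / fld ξ e) ^ 2 ^ t =
            1 + ∑ j : Fin m, e j • (ξ ^ (j : ℕ) / fld ξ e) ^ (2 ^ t + 1)) ∧
        (∑ a : GaloisField 2 m,
            zeta (∑ i : Fin m, ∑ j : Fin m,
              lift2 (e i) * lift2 (Pmat ξ 0 a i j) *
                (2 * lift2 (x j) + lift2 (e j)))) ≠ 0) := by
  have hE : fld ξ e ≠ 0 := fld_ne_zero hξ he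
  have hsum := sum_zeta_sieveMatrix_eq_prod ξ x e r
  simp only [sieveMatrix] at hsum
  rw [hsum, mul_ne_zero_iff, Finset.prod_ne_zero_iff, and_comm]
  simp only [Finset.mem_univ, true_implies, sum_zetaChar_doubleLift_tr_ne_zero_iff,
    crossCoeff_eq_zero_iff ξ _ x hE]
  refine and_congr_left' ⟨fun h t ht1 htr => ?_, fun h t => h _ (by omega) t.isLt⟩
  obtain ⟨s, rfl⟩ := Nat.exists_eq_add_of_le' ht1
  exact h ⟨s, htr⟩

/-- Non-orthogonality criterion for rows of the Delsarte–Goethals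
sieve.  For `r ≥ 1` and binary `m`-tuples `x` and `y = x ⊕ e` with `e ≠ 0`, the rows of
the `DG(m,r)` sieve indexed by `x` and `y` are non-orthogonal, i.e.
`∑_{a ∈ F^{r+1}} i^{y P_a yᵀ − x P_a xᵀ} ≠ 0` where `P_a = ∑_{t=0}^r P^t(a_t)`, if and
only if both:
(C1) for every `1 ≤ t ≤ r`, `(x/e) + (x/e)^{2^t} = 1 + ∑_j e_j (ξ^j/e)^{2^t+1}` in
`GF(2^m)`; and
(C2) `∑_{a ∈ GF(2^m)} i^{e P⁰(a) (2x + e)ᵀ} ≠ 0`. -/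
theorem dg_sieve_rows_nonorthogonal_iff
    (m r : ℕ) (hm : 0 < m) (hr : 1 ≤ r)
    (ξ : GaloisField 2 m)
    (hξ : LinearIndependent (ZMod 2) fun j : Fin m => ξ ^ (j : ℕ))
    (x e : Fin m → ZMod 2) (he : e ≠ 0) :
    (∑ a : Fin (r + 1) → GaloisField 2 m,
        zeta (qform (∑ t : Fin (r + 1), Pmat ξ (t : ℕ) (a t)) (x + e) -
          qform (∑ t : Fin (r + 1), Pmat ξ (t : ℕ) (a t)) x)) ≠ 0 ↔
      ((∀ t : ℕ, 1 ≤ t → t ≤ r →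
          fld ξ x / fld ξ e + (fld ξ x / fld ξ e) ^ 2 ^ t =
            1 + ∑ j : Fin m, e j • (ξ ^ (j : ℕ) / fld ξ e) ^ (2 ^ t + 1)) ∧
        (∑ a : GaloisField 2 m,
            zeta (∑ i : Fin m, ∑ j : Fin m,
              lift2 (e i) * lift2 (Pmat ξ 0 a i j) *
                (2 * lift2 (x j) + lift2 (e j)))) ≠ 0) :=
  dg_sieve_rows_nonorthogonal_iff_general m r ξ hξ x e he

end DGPaper
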